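/- Let M be a countable coarse group satisfying the negative-expression axiom and the coset-recognition axiom, and such that the product of full filters is associative. Then the Polish group F(M) is compact if and only if both: for every *subgroup U there is a *subgroup V with V ⊑ U and LC(V) = RC(V), and for every *subgroup U the set LC(U) is finite. -/

import Mathlib

/-! Abstract coarse groups (Nies–Schlicht–Tent). -/

namespace CoarsePaper

/-- A structure with one ternary relation `rel A B C`, read "AB ⊑ C". -/
structure CG (M : Type) : Type where
  rel : M → M → M → Prop

variable {M : Type}

/-- `U` is a *subgroup: `UU ⊑ U`. -/
def IsSub (c : CG M) (U : M) : Prop := c.rel U U U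

/-- For *subgroups, `U ⊑ V` means `UV ⊑ V`. -/
def sle (c : CG M) (U V : M) : Prop := c.rel U V V

/-- `A ∈ LC(U)`: `U` is the ⊑-maximum *subgroup with `AU ⊑ A`. -/
def LC (c : CG M) (U A : M) : Prop :=
  IsSub c U ∧ c.rel A U A ∧ ∀ V, IsSub c V → c.rel A V A → sle c V U

/-- `A ∈ RC(U)`: `U` is the ⊑-maximum *subgroup with `UA ⊑ A`. -/
def RC (c : CG M) (U A : M) : Prop :=
  IsSub c U ∧ c.rel U A A ∧ ∀ V, IsSub c V → c.rel V A A → sle c V U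

/-- `A ⊑ B` for arbitrary elements: `AU ⊑ B` for some *subgroup `U` with `A ∈ LC(U)`. -/
def cle (c : CG M) (A B : M) : Prop := ∃ U, LC c U A ∧ c.rel A U B

/-- `A`, `B` are disjoint: there are no `C`, `D` with `CD ⊑ A` and `CD ⊑ B`. -/
def Disj (c : CG M) (A B : M) : Prop := ¬ ∃ C D, c.rel C D A ∧ c.rel C D B

/-- `S(A,B)`: there is a *subgroup `V` with `A ∈ RC(V)`, `B ∈ LC(V)`, `AB ⊑ V`;
we then write `B = A⋄`. -/
def Srel (c : CG M) (A B : M) : Prop :=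
  ∃ V, RC c V A ∧ LC c V B ∧ c.rel A B V

/-- The axioms of a coarse group. -/
structure Axioms (c : CG M) : Prop where
  -- (0a) ⊑ is a partial order on *subgroups in which any two elements have a meet
  sle_refl : ∀ U, IsSub c U → sle c U U
  sle_antisymm : ∀ U V, IsSub c U → IsSub c V → sle c U V → sle c V U → U = V
  sle_trans : ∀ U V W, IsSub c U → IsSub c V → IsSub c W → sle c U V → sle c V W → sle c U W
  meet : ∀ U V, IsSub c U → IsSub c V → ∃ W, IsSub c W ∧ sle c W U ∧ sle c W V ∧
    ∀ T, IsSub c T → sle c T U → sle c T V → sle c T W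
  -- (0b) every element is a left *coset and a right *coset of some *subgroup
  exists_lc : ∀ A, ∃ U, LC c U A
  exists_rc : ∀ A, ∃ U, RC c U A
  -- (0c) ⊑ is a partial order on M extending ⊑ on *subgroups
  cle_refl : ∀ A, cle c A A
  cle_antisymm : ∀ A B, cle c A B → cle c B A → A = B
  cle_trans : ∀ A B C, cle c A B → cle c B C → cle c A C
  cle_ext : ∀ U V, IsSub c U → IsSub c V → (cle c U V ↔ sle c U V)
  -- (1)
  lc_up : ∀ U' U A', IsSub c U' → IsSub c U → sle c U' U → LC c U' A' →
    ∃ A, LC c U A ∧ cle c A' A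
  lc_disj : ∀ U' U A' A, IsSub c U' → IsSub c U → sle c U' U → LC c U' A' → LC c U A →
    cle c A' A ∨ Disj c A' A
  rc_up : ∀ U' U A', IsSub c U' → IsSub c U → sle c U' U → RC c U' A' →
    ∃ A, RC c U A ∧ cle c A' A
  rc_disj : ∀ U' U A' A, IsSub c U' → IsSub c U → sle c U' U → RC c U' A' → RC c U A →
    cle c A' A ∨ Disj c A' A
  -- (2) monotonicity
  mono : ∀ A₀ A₁ B₀ B₁ C, c.rel B₀ B₁ C → cle c A₀ B₀ → cle c A₁ B₁ → c.rel A₀ A₁ C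
  -- (3)
  lc_sub_iff : ∀ U V B, IsSub c U → IsSub c V → LC c V B →
    (sle c U V ↔ ∃ A, LC c U A ∧ cle c A B)
  rc_sub_iff : ∀ U V B, IsSub c U → IsSub c V → RC c V B →
    (sle c U V ↔ ∃ A, RC c U A ∧ cle c A B)
  -- (4) inverses
  srel_existsUnique : ∀ A, ∃! B, Srel c A B
  srel_symm : ∀ A B, Srel c A B → Srel c B A
  srel_orderIso : ∀ A B A' B', Srel c A A' → Srel c B B' → (cle c A B ↔ cle c A' B')
  -- (5) products of compatible *cosets
  prod_exists : ∀ U V W A B, RC c U A → LC c V A → RC c V B → LC c W B →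
    ∃ C, RC c U C ∧ LC c W C ∧ c.rel A B C ∧ ∀ D, c.rel A B D → cle c C D

/-- A full filter on `M`. -/
structure FullFilter (c : CG M) (x : Set M) : Prop where
  up : ∀ A ∈ x, ∀ B, cle c A B → B ∈ x
  directed : ∀ A ∈ x, ∀ B ∈ x, ∃ C ∈ x, cle c C A ∧ cle c C B
  lc_mem : ∀ U, IsSub c U → ∃ A ∈ x, LC c U A
  rc_mem : ∀ U, IsSub c U → ∃ A ∈ x, RC c U A

/-- The product of two filters: `x·y = {C : ∃ A ∈ x, B ∈ y, AB ⊑ C}`. -/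
def fprod (c : CG M) (x y : Set M) : Set M :=
  {C | ∃ A ∈ x, ∃ B ∈ y, c.rel A B C}

/-- The inverse of a filter: `x⁻¹ = {A⋄ : A ∈ x}`. -/
def finv (c : CG M) (x : Set M) : Set M :=
  {B | ∃ A ∈ x, Srel c A B}

/-- The identity filter: generated by the *subgroups. -/
def fone (c : CG M) : Set M := {C | ∃ U, IsSub c U ∧ cle c U C}

/-- The space `F(M)` of full filters on `M`. -/
abbrev FF (c : CG M) : Type := {x : Set M // FullFilter c x}

/-- The topology on `F(M)` generated by the sets `Â = {x : A ∈ x}`. -/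
def ffTop (c : CG M) : TopologicalSpace (FF c) :=
  TopologicalSpace.generateFrom {S | ∃ A : M, S = {x : FF c | A ∈ x.1}}

/-- `Â`, as a collection of subsets of `M`: the full filters containing `A`. -/
def hatS (c : CG M) (A : M) : Set (Set M) := {x | FullFilter c x ∧ A ∈ x}

/-- Associativity of the product of full filters. -/
def FAssoc (c : CG M) : Prop :=
  ∀ x y z : Set M, FullFilter c x → FullFilter c y → FullFilter c z →
    fprod c (fprod c x y) z = fprod c x (fprod c y z)

/-- The negative-expression axiom. -/
structure NegAx (c : CG M) : Prop where
  rel_iff : ∀ A B C, c.rel A B C ↔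
    ¬ ∃ D E F, cle c D A ∧ cle c E B ∧ c.rel D E F ∧ Disj c C F
  le_iff : ∀ A B, cle c A B ↔ ¬ ∃ C, cle c C A ∧ Disj c B C

/-- The action of a filter on a *coset: `x·A = B` iff `SA ⊑ B` for some `S ∈ x`. -/
def act (c : CG M) (x : Set M) (A B : M) : Prop := ∃ S ∈ x, c.rel S A B

/-- `𝒱 ⊆ F(M)` is a subgroup of the filter group `F(M)`. -/
def IsSubgroupFF (c : CG M) (V : Set (FF c)) : Prop :=
  (∀ z : FF c, z.1 = fone c → z ∈ V) ∧
  (∀ u ∈ V, ∀ v ∈ V, ∀ w : FF c, w.1 = fprod c u.1 v.1 → w ∈ V) ∧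
  (∀ u ∈ V, ∀ w : FF c, w.1 = finv c u.1 → w ∈ V)

/-- The union of double cosets `⋃_{i<n} V̂·Â_i`, as a collection of subsets of `M`
(the underlying sets of the full filters belonging to it). -/
def doubleUnion (c : CG M) (V : M) {n : ℕ} (A : Fin n → M) : Set (Set M) :=
  {z | ∃ i : Fin n, ∃ u v : Set M, FullFilter c u ∧ FullFilter c v ∧ V ∈ u ∧ A i ∈ v ∧
    z = fprod c u v}

/-- The coset-recognition axiom. -/
def CosetRec (c : CG M) : Prop :=
  ∀ V, IsSub c V → ∀ n : ℕ, 1 ≤ n → ∀ A : Fin n → M, (∀ i, LC c V (A i)) →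
    (fone c ∈ doubleUnion c V A ∧
     (∀ p ∈ doubleUnion c V A, ∀ q ∈ doubleUnion c V A, fprod c p q ∈ doubleUnion c V A) ∧
     (∀ p ∈ doubleUnion c V A, finv c p ∈ doubleUnion c V A)) →
    ∃ U, IsSub c U ∧ (∀ i, c.rel V (A i) U) ∧
      ∀ z : Set M, FullFilter c z → U ∈ z → z ∈ doubleUnion c V A

/-- Roelcke precompactness of the filter group `F(M)`: every open neighbourhood `𝒰` of the
identity satisfies `F(M) = 𝒰·F·𝒰` for some finite `F`. -/
def RoelckeFF (c : CG M) : Prop :=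
  ∀ U : Set (FF c), @IsOpen (FF c) (ffTop c) U → (∀ z : FF c, z.1 = fone c → z ∈ U) →
    ∃ F : Set (FF c), F.Finite ∧
      ∀ z : FF c, ∃ u ∈ U, ∃ f ∈ F, ∃ v ∈ U, z.1 = fprod c (fprod c u.1 f.1) v.1

/-
If every `LC(U)` is finite and every *subgroup contains a *subgroup `V` with `LC(V) = RC(V)`,
then a set of elements is a full filter as soon as it is upward closed, contains a left *coset of
every *subgroup and is coherent along `⊑`. These are closed conditions on its indicator function
in the Cantor space `M → Bool`, so `F(M)` is a continuous image of a compact space.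

Conversely, let `F(M)` be compact. For each *subgroup `U` the open sets `Â`, `A ∈ LC(U)`,
partition `F(M)`, so `LC(U)` is finite. Moreover `Û` contains an open subgroup of the compact
group `F(M)`, hence an open normal subgroup `N`. Since `N` contains some `Ŵ`, it is a finite union
of double cosets `Ŵ·Â`, and coset recognition yields a *subgroup `V` with `V̂ = N`. Finally, if
`A ∈ LC(V) ∩ RC(T)` and `x ∈ Â`, then `x·V̂ = Â = T̂·x`, so normality of `V̂` forces `T = V`.
-/

open Topology

variable {c : CG M}

theorem Axioms.lc_unique (ax : Axioms c) {U V A : M} (hU : LC c U A) (hV : LC c V A) : U = V :=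
  ax.sle_antisymm U V hU.1 hV.1 (hV.2.2 U hU.1 hU.2.1) (hU.2.2 V hV.1 hV.2.1)

theorem Axioms.rc_unique (ax : Axioms c) {U V A : M} (hU : RC c U A) (hV : RC c V A) : U = V :=
  ax.sle_antisymm U V hU.1 hV.1 (hV.2.2 U hU.1 hU.2.1) (hU.2.2 V hV.1 hV.2.1)

theorem Axioms.cle_of_sle (ax : Axioms c) {U V : M} (hU : IsSub c U) (hV : IsSub c V)
    (h : sle c U V) : cle c U V :=
  (ax.cle_ext U V hU hV).mpr h

theorem Axioms.exists_prod (ax : Axioms c) {V A B : M} (hA : LC c V A) (hB : RC c V B) :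
    ∃ C, (∀ U, RC c U A → RC c U C) ∧ (∀ W, LC c W B → LC c W C) ∧ c.rel A B C ∧
      ∀ D, c.rel A B D → cle c C D := by
  obtain ⟨U, hU⟩ := ax.exists_rc A
  obtain ⟨W, hW⟩ := ax.exists_lc B
  obtain ⟨C, hUC, hWC, hC, hmin⟩ := ax.prod_exists U V W A B hU hA hB hW
  exact ⟨C, fun U' hU' => ax.rc_unique hU hU' ▸ hUC, fun W' hW' => ax.lc_unique hW hW' ▸ hWC,
    hC, hmin⟩

theorem Axioms.exists_le_lc_rc (ax : Axioms c) (B : M) {V : M} (hV : IsSub c V) :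
    ∃ B', cle c B' B ∧ (∃ A, LC c V A ∧ cle c B' A) ∧ ∃ A, RC c V A ∧ cle c B' A := by
  obtain ⟨S, hS⟩ := ax.exists_lc B
  obtain ⟨W, hW, hWS, hWV, -⟩ := ax.meet S V hS.1 hV
  obtain ⟨B₁, hB₁, hB₁B⟩ := (ax.lc_sub_iff W S B hW hS.1 hS).mp hWS
  obtain ⟨T, hT⟩ := ax.exists_rc B₁
  obtain ⟨W', hW', hW'T, hW'V, -⟩ := ax.meet T V hT.1 hV
  obtain ⟨B₂, hB₂, hB₂B₁⟩ := (ax.rc_sub_iff W' T B₁ hW' hT.1 hT).mp hW'T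
  obtain ⟨A, hA, hB₁A⟩ := ax.lc_up W V B₁ hW hV hWV hB₁
  obtain ⟨A', hA', hB₂A'⟩ := ax.rc_up W' V B₂ hW' hV hW'V hB₂
  exact ⟨B₂, ax.cle_trans _ _ _ hB₂B₁ hB₁B, ⟨A, hA, ax.cle_trans _ _ _ hB₂B₁ hB₁A⟩, A', hA',
    hB₂A'⟩

theorem Axioms.cle_of_rel_rc (ax : Axioms c) (nax : NegAx c) {S R C : M} (hR : RC c S R)
    (h : c.rel S R C) : cle c R C := by
  rw [nax.le_iff]
  rintro ⟨D, hDR, hdisj⟩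
  obtain ⟨S', hS'⟩ := ax.exists_rc D
  have hS'S : sle c S' S := (ax.rc_sub_iff S' S R hS'.1 hR.1 hR).mpr ⟨D, hS', hDR⟩
  exact hdisj ⟨S', D, ax.mono S' D S R C h (ax.cle_of_sle hS'.1 hR.1 hS'S) hDR, hS'.2.1⟩

theorem Axioms.isSub_of_rc_of_cle (ax : Axioms c) (nax : NegAx c) {T C : M} (hC : RC c T C)
    (hCT : cle c C T) : IsSub c C := by
  rw [IsSub, nax.rel_iff]
  rintro ⟨D, E, F, hDC, hEC, hDEF, hdisj⟩
  exact hdisj ⟨D, E, ax.mono D E T C C hC.2.1 (ax.cle_trans _ _ _ hDC hCT) hEC, hDEF⟩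

-- `A⋄`
noncomputable def Axioms.dia (ax : Axioms c) (A : M) : M :=
  (ax.srel_existsUnique A).exists.choose

theorem Axioms.srel_dia (ax : Axioms c) (A : M) : Srel c A (ax.dia A) :=
  (ax.srel_existsUnique A).exists.choose_spec

theorem Axioms.eq_dia_of_srel (ax : Axioms c) {A B : M} (h : Srel c A B) : A = ax.dia B :=
  (ax.srel_existsUnique B).unique (ax.srel_symm _ _ h) (ax.srel_dia B)

theorem Axioms.dia_dia (ax : Axioms c) (A : M) : ax.dia (ax.dia A) = A :=
  (ax.eq_dia_of_srel (ax.srel_dia A)).symm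

theorem Axioms.dia_cle_dia (ax : Axioms c) {A B : M} (h : cle c A B) :
    cle c (ax.dia A) (ax.dia B) :=
  (ax.srel_orderIso A B _ _ (ax.srel_dia A) (ax.srel_dia B)).mp h

theorem Axioms.lc_dia_of_rc (ax : Axioms c) {S A : M} (hA : RC c S A) : LC c S (ax.dia A) := by
  obtain ⟨V, hV, hL, -⟩ := ax.srel_dia A
  rwa [ax.rc_unique hV hA] at hL

theorem Axioms.rel_dia_of_rc (ax : Axioms c) {S A : M} (hA : RC c S A) :
    c.rel A (ax.dia A) S := by
  obtain ⟨V, hV, -, h⟩ := ax.srel_dia A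
  rwa [ax.rc_unique hV hA] at h

theorem Axioms.rc_dia_of_lc (ax : Axioms c) {T A : M} (hA : LC c T A) : RC c T (ax.dia A) := by
  obtain ⟨V, hR, hL, -⟩ := ax.srel_symm _ _ (ax.srel_dia A)
  rwa [ax.lc_unique hL hA] at hR

theorem Axioms.rel_dia_of_lc (ax : Axioms c) {T A : M} (hA : LC c T A) :
    c.rel (ax.dia A) A T := by
  obtain ⟨V, -, hL, h⟩ := ax.srel_symm _ _ (ax.srel_dia A)
  rwa [ax.lc_unique hL hA] at h

theorem Axioms.mem_finv_iff (ax : Axioms c) {x : Set M} {B : M} :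
    B ∈ finv c x ↔ ax.dia B ∈ x :=
  ⟨fun ⟨_, hA, hAB⟩ => ax.eq_dia_of_srel hAB ▸ hA,
    fun h => ⟨_, h, ax.srel_symm _ _ (ax.srel_dia B)⟩⟩

theorem Axioms.dia_mem_finv (ax : Axioms c) {x : Set M} {A : M} (hA : A ∈ x) :
    ax.dia A ∈ finv c x :=
  ⟨A, hA, ax.srel_dia A⟩

-- The witness is `A⋄·A` for some `A ∈ LC(U)`.
theorem Axioms.exists_identityCoset (ax : Axioms c) (nax : NegAx c) {U : M} (hU : IsSub c U) :
    ∃ C, IsSub c C ∧ LC c U C ∧ RC c U C ∧ cle c C U ∧ Srel c C C := by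
  obtain ⟨S, hS⟩ := ax.exists_lc U
  obtain ⟨A, hA, -⟩ := (ax.lc_sub_iff U S U hU hS.1 hS).mp (hS.2.2 U hU hU)
  obtain ⟨T, hT⟩ := ax.exists_rc A
  obtain ⟨C, hRC, hLC, -, hmin⟩ := ax.exists_prod (ax.lc_dia_of_rc hT) hT
  have hCU : RC c U C := hRC U (ax.rc_dia_of_lc hA)
  have hUC : LC c U C := hLC U hA
  have hle : cle c C U := hmin U (ax.rel_dia_of_lc hA)
  exact ⟨C, ax.isSub_of_rc_of_cle nax hCU hle, hUC, hCU, hle, U, hCU, hUC,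
    ax.mono C C U U U hU hle hle⟩

namespace FullFilter

variable {x y : Set M}

theorem not_disj (hx : FullFilter c x) (ax : Axioms c) {A B : M} (hA : A ∈ x) (hB : B ∈ x) :
    ¬ Disj c A B := by
  obtain ⟨D, -, ⟨U, hU, hDA⟩, ⟨V, hV, hDB⟩⟩ := hx.directed A hA B hB
  obtain rfl := ax.lc_unique hU hV
  exact fun h => h ⟨D, U, hDA, hDB⟩

theorem cle_of_lc (hx : FullFilter c x) (ax : Axioms c) {U W A B : M} (hA : A ∈ x) (hB : B ∈ x)
    (hUA : LC c U A) (hWB : LC c W B) (hWU : sle c W U) : cle c B A :=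
  (ax.lc_disj W U B A hWB.1 hUA.1 hWU hWB hUA).resolve_right (hx.not_disj ax hB hA)

theorem cle_of_rc (hx : FullFilter c x) (ax : Axioms c) {U W A B : M} (hA : A ∈ x) (hB : B ∈ x)
    (hUA : RC c U A) (hWB : RC c W B) (hWU : sle c W U) : cle c B A :=
  (ax.rc_disj W U B A hWB.1 hUA.1 hWU hWB hUA).resolve_right (hx.not_disj ax hB hA)

theorem eq_of_lc (hx : FullFilter c x) (ax : Axioms c) {U A B : M} (hA : A ∈ x) (hB : B ∈ x)
    (hUA : LC c U A) (hUB : LC c U B) : A = B :=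
  ax.cle_antisymm A B (hx.cle_of_lc ax hB hA hUB hUA (ax.sle_refl U hUA.1))
    (hx.cle_of_lc ax hA hB hUA hUB (ax.sle_refl U hUA.1))

theorem exists_compatible (hx : FullFilter c x) (hy : FullFilter c y) (ax : Axioms c) {A B : M}
    (hA : A ∈ x) (hB : B ∈ y) :
    ∃ W, ∃ A' ∈ x, ∃ B' ∈ y, LC c W A' ∧ RC c W B' ∧ cle c A' A ∧ cle c B' B := by
  obtain ⟨S, hS⟩ := ax.exists_lc A
  obtain ⟨T, hT⟩ := ax.exists_rc B
  obtain ⟨W, hW, hWS, hWT, -⟩ := ax.meet S T hS.1 hT.1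
  obtain ⟨A', hA', hA'W⟩ := hx.lc_mem W hW
  obtain ⟨B', hB', hB'W⟩ := hy.rc_mem W hW
  exact ⟨W, A', hA', B', hB', hA'W, hB'W, hx.cle_of_lc ax hA hA' hS hA'W hWS,
    hy.cle_of_rc ax hB hB' hT hB'W hWT⟩

end FullFilter

theorem Axioms.fullFilter_of_antitone (ax : Axioms c) (s : ℕ → M)
    (hs : ∀ n, cle c (s (n + 1)) (s n))
    (hcos : ∀ U, IsSub c U → ∃ n, (∃ A, LC c U A ∧ cle c (s n) A) ∧ ∃ A, RC c U A ∧ cle c (s n) A) :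
    FullFilter c {C | ∃ n, cle c (s n) C} := by
  let _ : Preorder M := { le := cle c, le_refl := ax.cle_refl, le_trans := ax.cle_trans }
  have hanti : Antitone s := antitone_nat_of_succ_le hs
  refine ⟨fun B ⟨n, hn⟩ C hBC => ⟨n, ax.cle_trans _ _ _ hn hBC⟩, ?_, ?_, ?_⟩
  · rintro B ⟨n, hn⟩ C ⟨m, hm⟩
    exact ⟨s (max n m), ⟨_, ax.cle_refl _⟩, (hanti (le_max_left n m)).trans hn,
      (hanti (le_max_right n m)).trans hm⟩
  · intro U hU
    obtain ⟨n, ⟨A, hA, hnA⟩, -⟩ := hcos U hU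
    exact ⟨A, ⟨n, hnA⟩, hA⟩
  · intro U hU
    obtain ⟨n, -, A, hA, hnA⟩ := hcos U hU
    exact ⟨A, ⟨n, hnA⟩, hA⟩

-- A Rasiowa–Sikorski argument: descend along an enumeration of the *subgroups, passing below a
-- left and a right *coset of each.
theorem Axioms.exists_fullFilter [Countable M] (ax : Axioms c) (A : M) :
    ∃ x, FullFilter c x ∧ A ∈ x := by
  obtain ⟨U₀, hU₀⟩ := ax.exists_lc A
  have : Nonempty {U // IsSub c U} := ⟨⟨U₀, hU₀.1⟩⟩
  obtain ⟨e, he⟩ := exists_surjective_nat {U // IsSub c U}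
  choose next hnext using fun n B => ax.exists_le_lc_rc B (e n).2
  let s : ℕ → M := fun n => Nat.rec A next n
  refine ⟨_, ax.fullFilter_of_antitone s (fun n => (hnext n (s n)).1) fun U hU => ?_, 0,
    ax.cle_refl A⟩
  obtain ⟨n, hn⟩ := he ⟨U, hU⟩
  have := (hnext n (s n)).2
  rw [hn] at this
  exact ⟨n + 1, this⟩

theorem Axioms.exists_fullFilter_of_not_disj [Countable M] (ax : Axioms c) {A B : M}
    (h : ¬ Disj c A B) : ∃ x, FullFilter c x ∧ A ∈ x ∧ B ∈ x := by
  obtain ⟨P, Q, hPA, hPB⟩ := not_not.mp h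
  obtain ⟨S, hS⟩ := ax.exists_lc P
  obtain ⟨T, hT⟩ := ax.exists_rc Q
  obtain ⟨W, hW, hWS, hWT, -⟩ := ax.meet S T hS.1 hT.1
  obtain ⟨P', hP', hP'P⟩ := (ax.lc_sub_iff W S P hW hS.1 hS).mp hWS
  obtain ⟨Q', hQ', hQ'Q⟩ := (ax.rc_sub_iff W T Q hW hT.1 hT).mp hWT
  obtain ⟨C, -, -, -, hmin⟩ := ax.exists_prod hP' hQ'
  obtain ⟨x, hx, hC⟩ := ax.exists_fullFilter C
  exact ⟨x, hx, hx.up C hC A (hmin A (ax.mono _ _ _ _ _ hPA hP'P hQ'Q)),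
    hx.up C hC B (hmin B (ax.mono _ _ _ _ _ hPB hP'P hQ'Q))⟩

theorem Axioms.rel_of_cle [Countable M] (ax : Axioms c) (nax : NegAx c) {A B C C' : M}
    (h : c.rel A B C) (hCC' : cle c C C') : c.rel A B C' := by
  rw [nax.rel_iff]
  rintro ⟨D, E, F, hDA, hEB, hDEF, hdisj⟩
  obtain ⟨x, hx, hC, hF⟩ := ax.exists_fullFilter_of_not_disj
    fun hCF => (nax.rel_iff A B C).mp h ⟨D, E, F, hDA, hEB, hDEF, hCF⟩
  exact hx.not_disj ax (hx.up C hC C' hCC') hF hdisj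

theorem Axioms.sle_of_forall_mem [Countable M] (ax : Axioms c) (nax : NegAx c) {V U : M}
    (hV : IsSub c V) (hU : IsSub c U) (h : ∀ x, FullFilter c x → V ∈ x → U ∈ x) : sle c V U := by
  rw [← ax.cle_ext V U hV hU, nax.le_iff]
  rintro ⟨C, hCV, hdisj⟩
  obtain ⟨x, hx, hC⟩ := ax.exists_fullFilter C
  exact hx.not_disj ax (h x hx (hx.up C hC V hCV)) hC hdisj

theorem Axioms.eq_of_forall_mem_iff [Countable M] (ax : Axioms c) (nax : NegAx c) {V U : M}
    (hV : IsSub c V) (hU : IsSub c U) (h : ∀ x, FullFilter c x → (V ∈ x ↔ U ∈ x)) : V = U :=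
  ax.sle_antisymm V U hV hU (ax.sle_of_forall_mem nax hV hU fun x hx => (h x hx).mp)
    (ax.sle_of_forall_mem nax hU hV fun x hx => (h x hx).mpr)

theorem fullFilter_fone (ax : Axioms c) (nax : NegAx c) : FullFilter c (fone c) where
  up := fun _ ⟨U, hU, hUA⟩ _ hAB => ⟨U, hU, ax.cle_trans _ _ _ hUA hAB⟩
  directed := by
    rintro A ⟨U, hU, hUA⟩ B ⟨V, hV, hVB⟩
    obtain ⟨W, hW, hWU, hWV, -⟩ := ax.meet U V hU hV
    exact ⟨W, ⟨W, hW, ax.cle_refl W⟩, ax.cle_trans _ _ _ (ax.cle_of_sle hW hU hWU) hUA,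
      ax.cle_trans _ _ _ (ax.cle_of_sle hW hV hWV) hVB⟩
  lc_mem U hU := by
    obtain ⟨C, hC, hUC, -⟩ := ax.exists_identityCoset nax hU
    exact ⟨C, ⟨C, hC, ax.cle_refl C⟩, hUC⟩
  rc_mem U hU := by
    obtain ⟨C, hC, -, hCU, -⟩ := ax.exists_identityCoset nax hU
    exact ⟨C, ⟨C, hC, ax.cle_refl C⟩, hCU⟩

namespace FullFilter

variable {x y : Set M}

theorem fprod [Countable M] (hx : FullFilter c x) (hy : FullFilter c y) (ax : Axioms c)
    (nax : NegAx c) : FullFilter c (fprod c x y) where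
  up := fun _ ⟨A, hA, B, hB, h⟩ _ hCC' => ⟨A, hA, B, hB, ax.rel_of_cle nax h hCC'⟩
  directed := by
    rintro C₁ ⟨A₁, hA₁, B₁, hB₁, h₁⟩ C₂ ⟨A₂, hA₂, B₂, hB₂, h₂⟩
    obtain ⟨A, hA, hAA₁, hAA₂⟩ := hx.directed A₁ hA₁ A₂ hA₂
    obtain ⟨B, hB, hBB₁, hBB₂⟩ := hy.directed B₁ hB₁ B₂ hB₂
    obtain ⟨W, A', hA', B', hB', hA'W, hB'W, hA'A, hB'B⟩ := hx.exists_compatible hy ax hA hB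
    obtain ⟨C, -, -, hC, hmin⟩ := ax.exists_prod hA'W hB'W
    exact ⟨C, ⟨A', hA', B', hB', hC⟩,
      hmin C₁ (ax.mono _ _ _ _ _ h₁ (ax.cle_trans _ _ _ hA'A hAA₁) (ax.cle_trans _ _ _ hB'B hBB₁)),
      hmin C₂ (ax.mono _ _ _ _ _ h₂ (ax.cle_trans _ _ _ hA'A hAA₂) (ax.cle_trans _ _ _ hB'B hBB₂))⟩
  lc_mem T hT := by
    obtain ⟨A₀, hA₀, -⟩ := hx.lc_mem T hT
    obtain ⟨B₀, hB₀, hB₀T⟩ := hy.lc_mem T hT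
    obtain ⟨W, A, hA, B, hB, hAW, hBW, -, hBB₀⟩ := hx.exists_compatible hy ax hA₀ hB₀
    obtain ⟨T', hT'⟩ := ax.exists_lc B
    have hT'T : sle c T' T := (ax.lc_sub_iff T' T B₀ hT'.1 hT hB₀T).mpr ⟨B, hT', hBB₀⟩
    obtain ⟨C, -, hC, hABC, -⟩ := ax.exists_prod hAW hBW
    obtain ⟨C', hC', hCC'⟩ := ax.lc_up T' T C hT'.1 hT hT'T (hC T' hT')
    exact ⟨C', ⟨A, hA, B, hB, ax.rel_of_cle nax hABC hCC'⟩, hC'⟩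
  rc_mem T hT := by
    obtain ⟨A₀, hA₀, hA₀T⟩ := hx.rc_mem T hT
    obtain ⟨B₀, hB₀, -⟩ := hy.rc_mem T hT
    obtain ⟨W, A, hA, B, hB, hAW, hBW, hAA₀, -⟩ := hx.exists_compatible hy ax hA₀ hB₀
    obtain ⟨T', hT'⟩ := ax.exists_rc A
    have hT'T : sle c T' T := (ax.rc_sub_iff T' T A₀ hT'.1 hT hA₀T).mpr ⟨A, hT', hAA₀⟩
    obtain ⟨C, hC, -, hABC, -⟩ := ax.exists_prod hAW hBW
    obtain ⟨C', hC', hCC'⟩ := ax.rc_up T' T C hT'.1 hT hT'T (hC T' hT')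
    exact ⟨C', ⟨A, hA, B, hB, ax.rel_of_cle nax hABC hCC'⟩, hC'⟩

theorem finv (hx : FullFilter c x) (ax : Axioms c) : FullFilter c (finv c x) where
  up B hB B' hBB' := by
    rw [ax.mem_finv_iff] at hB ⊢
    exact hx.up _ hB _ (ax.dia_cle_dia hBB')
  directed B₁ hB₁ B₂ hB₂ := by
    rw [ax.mem_finv_iff] at hB₁ hB₂
    obtain ⟨D, hD, hD₁, hD₂⟩ := hx.directed _ hB₁ _ hB₂
    refine ⟨ax.dia D, ax.dia_mem_finv hD, ?_, ?_⟩
    · simpa only [ax.dia_dia] using ax.dia_cle_dia hD₁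
    · simpa only [ax.dia_dia] using ax.dia_cle_dia hD₂
  lc_mem U hU := by
    obtain ⟨A, hA, hAU⟩ := hx.rc_mem U hU
    exact ⟨ax.dia A, ax.dia_mem_finv hA, ax.lc_dia_of_rc hAU⟩
  rc_mem U hU := by
    obtain ⟨A, hA, hAU⟩ := hx.lc_mem U hU
    exact ⟨ax.dia A, ax.dia_mem_finv hA, ax.rc_dia_of_lc hAU⟩

end FullFilter

theorem fone_fprod (ax : Axioms c) (nax : NegAx c) {x : Set M} (hx : FullFilter c x) :
    fprod c (fone c) x = x := by
  ext C
  constructor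
  · rintro ⟨E, ⟨W, hW, hWE⟩, B, hB, hEB⟩
    obtain ⟨T, hT⟩ := ax.exists_rc B
    obtain ⟨W', hW', hW'W, hW'T, -⟩ := ax.meet W T hW hT.1
    obtain ⟨R, hR, hRW'⟩ := hx.rc_mem W' hW'
    have hW'E : cle c W' E := ax.cle_trans _ _ _ (ax.cle_of_sle hW' hW hW'W) hWE
    have hRB : cle c R B := hx.cle_of_rc ax hB hR hT hRW' hW'T
    exact hx.up R hR C (ax.cle_of_rel_rc nax hRW' (ax.mono _ _ _ _ _ hEB hW'E hRB))
  · intro hC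
    obtain ⟨T, hT⟩ := ax.exists_rc C
    exact ⟨T, ⟨T, hT.1, ax.cle_refl T⟩, C, hC, hT.2.1⟩

theorem finv_fprod [Countable M] (ax : Axioms c) (nax : NegAx c) {x : Set M}
    (hx : FullFilter c x) : fprod c (finv c x) x = fone c := by
  ext C
  constructor
  · rintro ⟨B, hB, A, hA, hBA⟩
    rw [ax.mem_finv_iff] at hB
    obtain ⟨D, hD, hDB, hDA⟩ := hx.directed _ hB A hA
    obtain ⟨S, hS⟩ := ax.exists_rc D
    obtain ⟨T, hT⟩ := ax.exists_lc D
    obtain ⟨C', hC', -, -, hmin⟩ := ax.exists_prod (ax.lc_dia_of_rc hS) hS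
    have hC'T : cle c C' T := hmin T (ax.rel_dia_of_lc hT)
    have hDB' : cle c (ax.dia D) B := by simpa only [ax.dia_dia] using ax.dia_cle_dia hDB
    exact ⟨C', ax.isSub_of_rc_of_cle nax (hC' T (ax.rc_dia_of_lc hT)) hC'T,
      hmin C (ax.mono _ _ _ _ _ hBA hDB' hDA)⟩
  · rintro ⟨W, hW, hWC⟩
    obtain ⟨A, hA, hAW⟩ := hx.lc_mem W hW
    exact ⟨ax.dia A, ax.dia_mem_finv hA, A, hA, ax.rel_of_cle nax (ax.rel_dia_of_lc hAW) hWC⟩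

theorem isOpen_setOf_mem (A : M) : IsOpen[ffTop c] {x : FF c | A ∈ x.1} :=
  TopologicalSpace.isOpen_generateFrom_of_mem ⟨A, rfl⟩

theorem exists_mem_subset_of_mem_nhds {x : FF c} (hx : x.1.Nonempty) {O : Set (FF c)}
    (hO : O ∈ @nhds _ (ffTop c) x) : ∃ A ∈ x.1, {y : FF c | A ∈ y.1} ⊆ O := by
  rw [ffTop, TopologicalSpace.nhds_generateFrom, Filter.mem_biInf_of_directed] at hO
  · obtain ⟨_, ⟨hA, A, rfl⟩, hAO⟩ := hO
    exact ⟨A, hA, hAO⟩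
  · rintro _ ⟨hA, A, rfl⟩ _ ⟨hB, B, rfl⟩
    obtain ⟨D, hD, hDA, hDB⟩ := x.2.directed A hA B hB
    exact ⟨_, ⟨hD, D, rfl⟩, Filter.principal_mono.mpr fun y hy => y.2.up D hy A hDA,
      Filter.principal_mono.mpr fun y hy => y.2.up D hy B hDB⟩
  · obtain ⟨A, hA⟩ := hx
    exact ⟨_, hA, A, rfl⟩

theorem finite_lc_of_compactSpace [Countable M] (ax : Axioms c)
    (hc : @CompactSpace (FF c) (ffTop c)) {U : M} (hU : IsSub c U) : {A | LC c U A}.Finite := by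
  let _ := ffTop c
  obtain ⟨t, ht⟩ := isCompact_univ.elim_finite_subcover
    (fun A : {A // LC c U A} => {x : FF c | A.1 ∈ x.1}) (fun A => isOpen_setOf_mem A.1)
    fun x _ => Set.mem_iUnion.mpr <| (x.2.lc_mem U hU).elim fun A ⟨hA, hAU⟩ => ⟨⟨A, hAU⟩, hA⟩
  refine (t.finite_toSet.image Subtype.val).subset fun A hAU => ?_
  obtain ⟨x, hx, hA⟩ := ax.exists_fullFilter A
  obtain ⟨B, hBt, hB⟩ := Set.mem_iUnion₂.mp (ht (Set.mem_univ ⟨x, hx⟩))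
  exact ⟨B, hBt, hx.eq_of_lc ax hB hA B.2 hAU⟩

-- Unlike `FullFilter c s`, this is a closed condition on the indicator of `s` once every `LC(U)`
-- is finite.
def IsCoherent (c : CG M) (s : Set M) : Prop :=
  (∀ A ∈ s, ∀ B, cle c A B → B ∈ s) ∧ (∀ U, IsSub c U → ∃ A ∈ s, LC c U A) ∧
    ∀ W U C A, sle c W U → LC c W C → LC c U A → C ∈ s → A ∈ s → cle c C A

theorem FullFilter.isCoherent {x : Set M} (hx : FullFilter c x) (ax : Axioms c) :
    IsCoherent c x :=
  ⟨hx.up, hx.lc_mem, fun _ _ _ _ hWU hC hA hCx hAx => hx.cle_of_lc ax hAx hCx hA hC hWU⟩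

theorem IsCoherent.fullFilter {s : Set M} (hs : IsCoherent c s) (ax : Axioms c)
    (hnorm : ∀ U, IsSub c U → ∃ V, IsSub c V ∧ sle c V U ∧ ∀ A, (LC c V A ↔ RC c V A)) :
    FullFilter c s where
  up := hs.1
  directed A hA B hB := by
    obtain ⟨S, hS⟩ := ax.exists_lc A
    obtain ⟨T, hT⟩ := ax.exists_lc B
    obtain ⟨W, hW, hWS, hWT, -⟩ := ax.meet S T hS.1 hT.1
    obtain ⟨C, hC, hCW⟩ := hs.2.1 W hW
    exact ⟨C, hC, hs.2.2 W S C A hWS hCW hS hC hA, hs.2.2 W T C B hWT hCW hT hC hB⟩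
  lc_mem := hs.2.1
  rc_mem U hU := by
    obtain ⟨V, hV, hVU, hLR⟩ := hnorm U hU
    obtain ⟨A, hA, hAV⟩ := hs.2.1 V hV
    obtain ⟨B, hB, hAB⟩ := ax.rc_up V U A hV hU hVU ((hLR A).mp hAV)
    exact ⟨B, hs.1 A hA B hAB, hB⟩

theorem isClopen_setOf_apply_eq_true (A : M) : IsClopen {f : M → Bool | f A = true} :=
  (isClopen_discrete {true}).preimage (continuous_apply A)

theorem isClosed_setOf_isCoherent (hfin : ∀ U, IsSub c U → {A | LC c U A}.Finite) :
    IsClosed {f : M → Bool | IsCoherent c {A | f A = true}} := by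
  have hmem (A : M) := isClopen_setOf_apply_eq_true A
  simp only [IsCoherent, Set.mem_ofPred_eq, Set.ofPred_and, Set.ofPred_forall]
  refine .inter (isClosed_iInter fun A => isClosed_imp (hmem A).isOpen ?_) (.inter ?_ ?_)
  · simp only [Set.ofPred_forall]
    exact isClosed_iInter fun B => isClosed_iInter fun _ => (hmem B).isClosed
  · refine isClosed_iInter fun U => isClosed_iInter fun hU => ?_
    convert (hfin U hU).isClosed_biUnion fun A _ => (hmem A).isClosed using 1
    ext f
    simp [and_comm]
  · exact isClosed_iInter fun W => isClosed_iInter fun U => isClosed_iInter fun C =>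
      isClosed_iInter fun A => isClosed_iInter fun _ => isClosed_iInter fun _ =>
        isClosed_iInter fun _ => isClosed_imp (hmem C).isOpen <|
          isClosed_imp (hmem A).isOpen isClosed_const

theorem compactSpace_of_lc_eq_rc (ax : Axioms c)
    (hnorm : ∀ U, IsSub c U → ∃ V, IsSub c V ∧ sle c V U ∧ ∀ A, (LC c V A ↔ RC c V A))
    (hfin : ∀ U, IsSub c U → {A | LC c U A}.Finite) : @CompactSpace (FF c) (ffTop c) := by
  classical
  let _ := ffTop c
  let K := {f : M → Bool | IsCoherent c {A | f A = true}}
  have : CompactSpace K := isCompact_iff_compactSpace.mp (isClosed_setOf_isCoherent hfin).isCompact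
  let toFF : K → FF c := fun f => ⟨_, f.2.fullFilter ax hnorm⟩
  refine Function.Surjective.compactSpace (f := toFF) ?_ fun x => ?_
  · refine continuous_generateFrom_iff.mpr ?_
    rintro _ ⟨A, rfl⟩
    exact (isClopen_setOf_apply_eq_true A).isOpen.preimage continuous_subtype_val
  · refine ⟨⟨fun A => decide (A ∈ x.1), ?_⟩, Subtype.ext (by simp [toFF])⟩
    simpa [K] using x.2.isCoherent ax

-- `F(M)`, as a type that records the hypotheses its group structure depends on.
def FilterGroup (_ : Axioms c) (_ : NegAx c) (_ : FAssoc c) : Type :=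
  FF c

namespace FilterGroup

variable {ax : Axioms c} {nax : NegAx c} {hassoc : FAssoc c}

instance : TopologicalSpace (FilterGroup ax nax hassoc) := ffTop c

theorem isOpen_setOf_mem (A : M) : IsOpen {x : FilterGroup ax nax hassoc | A ∈ x.1} :=
  CoarsePaper.isOpen_setOf_mem A

instance : One (FilterGroup ax nax hassoc) :=
  ⟨⟨fone c, fullFilter_fone ax nax⟩⟩

instance : Inv (FilterGroup ax nax hassoc) :=
  ⟨fun x => ⟨finv c x.1, x.2.finv ax⟩⟩

theorem exists_isSub_subset_of_mem_nhds_one {U : M} (hU : IsSub c U)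
    {O : Set (FilterGroup ax nax hassoc)} (hO : O ∈ 𝓝 1) :
    ∃ W, IsSub c W ∧ ∀ z : FilterGroup ax nax hassoc, W ∈ z.1 → z ∈ O := by
  obtain ⟨A, ⟨W, hW, hWA⟩, hAO⟩ := exists_mem_subset_of_mem_nhds
    (x := (1 : FilterGroup ax nax hassoc)) ⟨U, U, hU, ax.cle_refl U⟩ hO
  exact ⟨W, hW, fun z hz => hAO (z.2.up W hz A hWA)⟩

variable [Countable M]

instance : Mul (FilterGroup ax nax hassoc) :=
  ⟨fun x y => ⟨fprod c x.1 y.1, x.2.fprod y.2 ax nax⟩⟩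

noncomputable instance : Group (FilterGroup ax nax hassoc) :=
  Group.ofLeftAxioms (fun x y z => Subtype.ext (hassoc x.1 y.1 z.1 x.2 y.2 z.2))
    (fun x => Subtype.ext (fone_fprod ax nax x.2)) (fun x => Subtype.ext (finv_fprod ax nax x.2))

instance : IsTopologicalGroup (FilterGroup ax nax hassoc) where
  continuous_mul := by
    refine continuous_generateFrom_iff.mpr ?_
    rintro _ ⟨C, rfl⟩
    refine isOpen_iff_mem_nhds.mpr ?_
    rintro ⟨x, y⟩ ⟨A, hA, B, hB, hAB⟩
    exact Filter.mem_of_superset (prod_mem_nhds ((isOpen_setOf_mem A).mem_nhds hA)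
      ((isOpen_setOf_mem B).mem_nhds hB)) fun p hp => ⟨A, hp.1, B, hp.2, hAB⟩
  continuous_inv := by
    refine continuous_generateFrom_iff.mpr ?_
    rintro _ ⟨B, rfl⟩
    convert isOpen_setOf_mem (ax := ax) (nax := nax) (hassoc := hassoc) (ax.dia B) using 1
    exact Set.ext fun x => ax.mem_finv_iff

theorem mem_inv_mul_iff_of_lc {W A : M} (hA : LC c W A) {x : FilterGroup ax nax hassoc}
    (hx : A ∈ x.1) (y : FilterGroup ax nax hassoc) : W ∈ (x⁻¹ * y).1 ↔ A ∈ y.1 := by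
  refine ⟨fun h => ?_, fun hy => ⟨ax.dia A, ax.dia_mem_finv hx, A, hy, ax.rel_dia_of_lc hA⟩⟩
  have : A ∈ (x * (x⁻¹ * y)).1 := ⟨A, hx, W, h, hA.2.1⟩
  rwa [mul_inv_cancel_left] at this

theorem mem_mul_inv_iff_of_rc {T A : M} (hA : RC c T A) {x : FilterGroup ax nax hassoc}
    (hx : A ∈ x.1) (y : FilterGroup ax nax hassoc) : T ∈ (y * x⁻¹).1 ↔ A ∈ y.1 := by
  refine ⟨fun h => ?_, fun hy => ⟨A, hy, ax.dia A, ax.dia_mem_finv hx, ax.rel_dia_of_rc hA⟩⟩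
  have : A ∈ (y * x⁻¹ * x).1 := ⟨T, h, A, hx, hA.2.1⟩
  rwa [inv_mul_cancel_right] at this

-- For `x ∈ Â`: `Â = x·V̂ = T̂·x`.
theorem mem_iff_mem_conj_of_lc_of_rc {V T A : M} (hV : LC c V A) (hT : RC c T A)
    {x : FilterGroup ax nax hassoc} (hx : A ∈ x.1) (y : FilterGroup ax nax hassoc) :
    T ∈ y.1 ↔ V ∈ (x⁻¹ * y * x).1 := by
  rw [mul_assoc, mem_inv_mul_iff_of_lc hV hx, ← mem_mul_inv_iff_of_rc hT hx,
    mul_inv_cancel_right]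

theorem lc_iff_rc_of_normal {V : M} (hV : IsSub c V) (N : Subgroup (FilterGroup ax nax hassoc))
    [hN : N.Normal] (hVN : ∀ z, V ∈ z.1 ↔ z ∈ N) (A : M) : LC c V A ↔ RC c V A := by
  have hconj (g y : FilterGroup ax nax hassoc) : V ∈ (g⁻¹ * y * g).1 ↔ V ∈ y.1 := by
    rw [hVN, hVN, hN.mem_comm_iff, mul_inv_cancel_left]
  obtain ⟨x, hx, hAx⟩ := ax.exists_fullFilter A
  let g : FilterGroup ax nax hassoc := ⟨x, hx⟩
  constructor
  · intro hA
    obtain ⟨T, hT⟩ := ax.exists_rc A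
    have hTV : T = V := ax.eq_of_forall_mem_iff nax hT.1 hV fun y hy =>
      (mem_iff_mem_conj_of_lc_of_rc hA hT (x := g) hAx ⟨y, hy⟩).trans (hconj g ⟨y, hy⟩)
    exact hTV ▸ hT
  · intro hA
    obtain ⟨T, hT⟩ := ax.exists_lc A
    have hTV : T = V := ax.eq_of_forall_mem_iff nax hT.1 hV fun y hy => by
      let z : FilterGroup ax nax hassoc := ⟨y, hy⟩
      have hz : g⁻¹ * (g * z * g⁻¹) * g = z := by group
      have := mem_iff_mem_conj_of_lc_of_rc hT hA (x := g) hAx (g * z * g⁻¹)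
      rw [hz] at this
      rw [← this, ← hconj g⁻¹ z, inv_inv]
    exact hTV ▸ hT

theorem doubleUnion_eq {W : M} (hW : IsSub c W) (N : Subgroup (FilterGroup ax nax hassoc))
    (hWN : ∀ z, W ∈ z.1 → z ∈ N) {n : ℕ} (f : Fin n → M)
    (hfN : ∀ i, LC c W (f i) ∧ ∃ z ∈ N, f i ∈ z.1) (hcover : ∀ z ∈ N, ∃ i, f i ∈ z.1) :
    doubleUnion c W f = {p | ∃ z : FilterGroup ax nax hassoc, z ∈ N ∧ z.1 = p} := by
  ext p
  constructor
  · rintro ⟨i, u, v, hu, hv, hWu, hfv, rfl⟩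
    obtain ⟨hfW, z, hz, hfz⟩ := hfN i
    let v' : FilterGroup ax nax hassoc := ⟨v, hv⟩
    have hv' : v' ∈ N := by
      have := N.mul_mem hz (hWN _ ((mem_inv_mul_iff_of_lc hfW hfz v').mpr hfv))
      rwa [mul_inv_cancel_left] at this
    exact ⟨⟨u, hu⟩ * v', N.mul_mem (hWN ⟨u, hu⟩ hWu) hv', rfl⟩
  · rintro ⟨z, hz, rfl⟩
    obtain ⟨i, hi⟩ := hcover z hz
    exact ⟨i, fone c, z.1, fullFilter_fone ax nax, z.2, ⟨W, hW, ax.cle_refl W⟩, hi,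
      (fone_fprod ax nax z.2).symm⟩

-- The `f i` enumerate the finitely many `A ∈ LC(W)` with `Â` meeting `N`, so that `N` is the
-- union of the double cosets `Ŵ·Â_i`.
theorem exists_isSub_forall_mem_iff (crec : CosetRec c) (N : Subgroup (FilterGroup ax nax hassoc))
    {W : M} (hW : IsSub c W) (hfin : {A | LC c W A}.Finite) (hWN : ∀ z, W ∈ z.1 → z ∈ N) :
    ∃ V, IsSub c V ∧ ∀ z, V ∈ z.1 ↔ z ∈ N := by
  set P : Set M := {A | LC c W A ∧ ∃ z ∈ N, A ∈ z.1}
  obtain ⟨n, f, hf⟩ := (hfin.subset fun A (hA : A ∈ P) => hA.1).fin_embedding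
  have hfN : ∀ i, f i ∈ P := fun i => hf ▸ Set.mem_range_self i
  have hcover : ∀ z ∈ N, ∃ i, f i ∈ z.1 := fun z hz => by
    obtain ⟨A, hA, hAW⟩ := z.2.lc_mem W hW
    obtain ⟨i, rfl⟩ : A ∈ Set.range f := hf ▸ ⟨hAW, z, hz, hA⟩
    exact ⟨i, hA⟩
  have hn : 1 ≤ n := (hcover 1 N.one_mem).elim fun i _ => i.pos
  have hunion := doubleUnion_eq hW N hWN f hfN hcover
  obtain ⟨V, hV, hWV, hVN⟩ := crec W hW n hn f (fun i => (hfN i).1) <| by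
    rw [hunion]
    refine ⟨⟨1, N.one_mem, rfl⟩, ?_, ?_⟩
    · rintro _ ⟨x, hx, rfl⟩ _ ⟨y, hy, rfl⟩
      exact ⟨x * y, N.mul_mem hx hy, rfl⟩
    · rintro _ ⟨x, hx, rfl⟩
      exact ⟨x⁻¹, N.inv_mem hx, rfl⟩
  refine ⟨V, hV, fun z => ⟨fun hz => ?_, fun hz => ?_⟩⟩
  · obtain ⟨z', hz', hz'z⟩ := hunion ▸ hVN z.1 z.2 hz
    exact Subtype.ext hz'z ▸ hz'
  · obtain ⟨i, hi⟩ := hcover z hz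
    have : V ∈ (1 * z).1 := ⟨W, ⟨W, hW, ax.cle_refl W⟩, f i, hi, hWV i⟩
    rwa [one_mul] at this

theorem exists_lc_eq_rc_of_compactSpace (crec : CosetRec c)
    [CompactSpace (FilterGroup ax nax hassoc)] (hfin : ∀ U, IsSub c U → {A | LC c U A}.Finite)
    {U : M} (hU : IsSub c U) : ∃ V, IsSub c V ∧ sle c V U ∧ ∀ A, LC c V A ↔ RC c V A := by
  obtain ⟨C, hC, -, -, hCU, hCC⟩ := ax.exists_identityCoset nax hU
  let H : OpenSubgroup (FilterGroup ax nax hassoc) :=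
    { carrier := {x | C ∈ x.1}
      one_mem' := ⟨C, hC, ax.cle_refl C⟩
      mul_mem' := fun hx hy => ⟨C, hx, C, hy, hC⟩
      inv_mem' := fun hx => ⟨C, hx, hCC⟩
      isOpen' := isOpen_setOf_mem C }
  obtain ⟨N, hNH⟩ :=
    IsTopologicalGroup.exist_openNormalSubgroup_sub_clopen_nhds_of_one H.isClopen H.one_mem
  obtain ⟨W, hW, hWN⟩ := exists_isSub_subset_of_mem_nhds_one hU (N.isOpen.mem_nhds N.one_mem)
  obtain ⟨V, hV, hVN⟩ := exists_isSub_forall_mem_iff crec N.toSubgroup hW (hfin W hW) hWN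
  refine ⟨V, hV, ax.sle_of_forall_mem nax hV hU fun x hx hVx => ?_,
    lc_iff_rc_of_normal hV N.toSubgroup hVN⟩
  exact hx.up C (hNH ((hVN ⟨x, hx⟩).mp hVx)) U hCU

end FilterGroup

/-- `F(M)` is compact iff every *subgroup contains a normal *subgroup and
every *subgroup has only finitely many left *cosets. -/
theorem stmt15 (c : CG M) [Countable M] (ax : Axioms c) (nax : NegAx c) (crec : CosetRec c)
    (hassoc : FAssoc c) :
    @CompactSpace (FF c) (ffTop c) ↔
      ((∀ U, IsSub c U → ∃ V, IsSub c V ∧ sle c V U ∧ ∀ A, (LC c V A ↔ RC c V A)) ∧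
       (∀ U, IsSub c U → {A | LC c U A}.Finite)) := by
  refine ⟨fun hc => ?_, fun ⟨hnorm, hfin⟩ => compactSpace_of_lc_eq_rc ax hnorm hfin⟩
  have hfin (U : M) (hU : IsSub c U) := finite_lc_of_compactSpace ax hc hU
  have : CompactSpace (FilterGroup ax nax hassoc) := hc
  exact ⟨fun U hU => FilterGroup.exists_lc_eq_rc_of_compactSpace crec hfin hU, hfin⟩

end CoarsePaper
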